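/- Let H be a quasitriangular Hopf π-coalgebra. Then the R-matrix satisfies the π-colored Yang-Baxter equation: (R_{β,γ})_{α23} · (R_{α,γ})_{1β3} · (R_{α,β})_{12γ} = (R_{α,β})_{12γ} · [(id ⊗ φ_{β⁻¹})(R_{α,βγβ⁻¹})]_{1β3} · (R_{β,γ})_{α23} in H_α ⊗ H_β ⊗ H_γ, for all α, β, γ ∈ π. -/
import Mathlib


open TensorProduct

/-- Transport along an equality of indices, as a `k`-linear map. -/
def castL (k : Type) [Field k] {π : Type} (H : π → Type) [∀ α, Ring (H α)]
    [∀ α, Algebra k (H α)] {α β : π} (h : α = β) : H α →ₗ[k] H β :=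
  h ▸ (LinearMap.id : H α →ₗ[k] H α)

/-- A Hopf `π`-coalgebra over a field `k`: a family of `k`-algebras `H α` with algebra maps
`Δ_{α,β} : H (α*β) → H α ⊗ H β`, a counit `ε : H 1 → k`, and antipodes `S_α : H α → H α⁻¹`,
subject to coassociativity, the counit axioms and the antipode axioms. -/
structure HopfGrpCoalg (k : Type) [Field k] (π : Type) [Group π] (H : π → Type)
    [∀ α, Ring (H α)] [∀ α, Algebra k (H α)] where
  comul : ∀ α β : π, H (α * β) →ₐ[k] H α ⊗[k] H β
  counit : H 1 →ₐ[k] k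
  antipode : ∀ α : π, H α →ₗ[k] H α⁻¹
  coassoc : ∀ (α β γ : π) (x : H (α * β * γ)),
    (TensorProduct.assoc k (H α) (H β) (H γ))
      (TensorProduct.map (comul α β).toLinearMap LinearMap.id ((comul (α * β) γ) x))
    = TensorProduct.map LinearMap.id (comul β γ).toLinearMap
        ((comul α (β * γ)) (castL k H (mul_assoc α β γ) x))
  counit_right : ∀ (α : π) (x : H (α * 1)),
    (TensorProduct.rid k (H α))
      ((LinearMap.lTensor (H α) counit.toLinearMap) ((comul α 1) x)) = castL k H (mul_one α) x
  counit_left : ∀ (α : π) (x : H (1 * α)),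
    (TensorProduct.lid k (H α))
      ((LinearMap.rTensor (H α) counit.toLinearMap) ((comul 1 α) x)) = castL k H (one_mul α) x
  antipode_mul : ∀ (α : π) (x : H 1),
    (LinearMap.mul' k (H α))
      (TensorProduct.map (castL k H (inv_inv α) ∘ₗ antipode α⁻¹) LinearMap.id
        ((comul α⁻¹ α) (castL k H (inv_mul_cancel α).symm x)))
    = counit x • 1
  mul_antipode : ∀ (α : π) (x : H 1),
    (LinearMap.mul' k (H α))
      (TensorProduct.map LinearMap.id (castL k H (inv_inv α) ∘ₗ antipode α⁻¹)
        ((comul α α⁻¹) (castL k H (mul_inv_cancel α).symm x)))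
    = counit x • 1

/-- A crossing for a Hopf `π`-coalgebra: a family of algebra isomorphisms
`φ_β : H α → H (β*α*β⁻¹)` compatible with comultiplication and counit, and giving an action
of `π`. -/
structure Crossing (k : Type) [Field k] (π : Type) [Group π] (H : π → Type)
    [∀ α, Ring (H α)] [∀ α, Algebra k (H α)] (Hc : HopfGrpCoalg k π H) where
  cross : ∀ β α : π, H α →ₐ[k] H (β * α * β⁻¹)
  bij : ∀ β α : π, Function.Bijective (cross β α)
  compat_comul : ∀ (β α γ : π) (x : H (α * γ)),
    TensorProduct.map (cross β α).toLinearMap (cross β γ).toLinearMap (Hc.comul α γ x)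
      = Hc.comul (β * α * β⁻¹) (β * γ * β⁻¹)
          (castL k H (show β * (α * γ) * β⁻¹ = β * α * β⁻¹ * (β * γ * β⁻¹) by group)
            (cross β (α * γ) x))
  compat_counit : ∀ (β : π) (x : H 1),
    Hc.counit (castL k H (show β * 1 * β⁻¹ = 1 by group) (cross β 1 x)) = Hc.counit x
  compat_comp : ∀ (α β γ : π) (x : H γ),
    cross α (β * γ * β⁻¹) (cross β γ x)
      = castL k H (show α * β * γ * (α * β)⁻¹ = α * (β * γ * β⁻¹) * α⁻¹ by group)
          (cross (α * β) γ x)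
section Legs
variable (k : Type) [Field k] {π : Type} [Group π] (H : π → Type)
    [∀ α, Ring (H α)] [∀ α, Algebra k (H α)] (α β γ : π)

/-- `r ↦ r ⊗ 1_γ`, the `12γ` leg embedding. -/
noncomputable def leg12 : (H α ⊗[k] H β) →ₗ[k] (H α ⊗[k] H β) ⊗[k] H γ :=
  (TensorProduct.mk k (H α ⊗[k] H β) (H γ)).flip 1

/-- `Σ p_j ⊗ q_j ↦ Σ p_j ⊗ 1_β ⊗ q_j`, the `1β3` leg embedding. -/
noncomputable def leg13 : (H α ⊗[k] H γ) →ₗ[k] (H α ⊗[k] H β) ⊗[k] H γ :=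
  LinearMap.rTensor (H γ) ((TensorProduct.mk k (H α) (H β)).flip 1)

/-- `r ↦ 1_α ⊗ r`, the `α23` leg embedding. -/
noncomputable def leg23 : (H β ⊗[k] H γ) →ₗ[k] (H α ⊗[k] H β) ⊗[k] H γ :=
  LinearMap.rTensor (H γ) (TensorProduct.mk k (H α) (H β) 1)

end Legs

/-- A quasitriangular Hopf `π`-coalgebra: a crossed Hopf `π`-coalgebra together with a family of
invertible `R`-matrices `R_{α,β} ∈ H α ⊗ H β` satisfying the axioms (QT1)–(QT4). -/
structure QTHopfGrpCoalg (k : Type) [Field k] (π : Type) [Group π] (H : π → Type)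
    [∀ α, Ring (H α)] [∀ α, Algebra k (H α)] (Hc : HopfGrpCoalg k π H)
    (cr : Crossing k π H Hc) where
  R : ∀ α β : π, H α ⊗[k] H β
  R_isUnit : ∀ α β : π, IsUnit (R α β)
  qt1 : ∀ (α β : π) (x : H (α * β)),
    R α β * Hc.comul α β x
      = (TensorProduct.comm k (H β) (H α))
          (TensorProduct.map
            ((castL k H (show α⁻¹ * (α * β * α⁻¹) * α⁻¹⁻¹ = β by group)) ∘ₗ
              (cr.cross α⁻¹ (α * β * α⁻¹)).toLinearMap)
            LinearMap.id
            (Hc.comul (α * β * α⁻¹) α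
              (castL k H (show α * β = α * β * α⁻¹ * α by group) x))) * R α β
  qt2 : ∀ α β γ : π,
    (TensorProduct.assoc k (H α) (H β) (H γ)).symm
        (LinearMap.lTensor (H α) (Hc.comul β γ).toLinearMap (R α (β * γ)))
      = leg13 k H α β γ (R α γ) * leg12 k H α β γ (R α β)
  qt3 : ∀ α β γ : π,
    LinearMap.rTensor (H γ) (Hc.comul α β).toLinearMap (R (α * β) γ)
      = leg13 k H α β γ
          (LinearMap.lTensor (H α)
            ((castL k H (show β⁻¹ * (β * γ * β⁻¹) * β⁻¹⁻¹ = γ by group)) ∘ₗ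
              (cr.cross β⁻¹ (β * γ * β⁻¹)).toLinearMap)
            (R α (β * γ * β⁻¹)))
        * leg23 k H α β γ (R β γ)
  qt4 : ∀ α β γ : π,
    TensorProduct.map (cr.cross β α).toLinearMap (cr.cross β γ).toLinearMap (R α γ)
      = R (β * α * β⁻¹) (β * γ * β⁻¹)
section Helpers
variable (k : Type) [Field k] {π : Type} [Group π] (H : π → Type)
    [∀ α, Ring (H α)] [∀ α, Algebra k (H α)]

set_option linter.unusedSectionVars false

lemma castL_rfl {α : π} (h : α = α) : castL k H h = LinearMap.id := rfl

/-- Transport along an equality of indices, as a `k`-algebra map. -/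
def castA {α β : π} (h : α = β) : H α →ₐ[k] H β := h ▸ AlgHom.id k (H α)

lemma castA_toLinearMap {α β : π} (h : α = β) :
    (castA k H h).toLinearMap = castL k H h := by subst h; rfl

lemma map_castL_R {Hc : HopfGrpCoalg k π H} {cr : Crossing k π H Hc}
    (Q : QTHopfGrpCoalg k π H Hc cr) {a a' b b' : π} (h1 : a = a') (h2 : b = b') :
    TensorProduct.map (castL k H h1) (castL k H h2) (Q.R a b) = Q.R a' b' := by
  subst h1; subst h2
  rw [castL_rfl, castL_rfl, TensorProduct.map_id]; rfl

lemma rTensor_castL_R {Hc : HopfGrpCoalg k π H} {cr : Crossing k π H Hc}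
    (Q : QTHopfGrpCoalg k π H Hc cr) {a a' : π} (h1 : a = a') (b : π) :
    LinearMap.rTensor (H b) (castL k H h1) (Q.R a b) = Q.R a' b := by
  subst h1; rw [castL_rfl, LinearMap.rTensor_id]; rfl

lemma map_leg13 {a b c d : π} (f : H a →ₗ[k] H b) (x : H a ⊗[k] H d) :
    LinearMap.rTensor (H d) (TensorProduct.map f (LinearMap.id : H c →ₗ[k] H c))
      (leg13 k H a c d x)
      = leg13 k H b c d (LinearMap.rTensor (H d) f x) := by
  induction x using TensorProduct.induction_on with
  | zero => simp
  | tmul p q => simp [leg13]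
  | add x y hx hy => simp only [map_add, hx, hy]

lemma map_leg23 {a b c d : π} (f : H a →ₐ[k] H b) (y : H c ⊗[k] H d) :
    LinearMap.rTensor (H d) (TensorProduct.map f.toLinearMap (LinearMap.id : H c →ₗ[k] H c))
      (leg23 k H a c d y) = leg23 k H b c d y := by
  induction y using TensorProduct.induction_on with
  | zero => simp
  | tmul p q => simp [leg23]
  | add x y hx hy => simp only [map_add, hx, hy]

lemma comm_leg13 {a b c : π} (x : H a ⊗[k] H c) :
    LinearMap.rTensor (H c) (TensorProduct.comm k (H a) (H b)).toLinearMap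
      (leg13 k H a b c x) = leg23 k H b a c x := by
  induction x using TensorProduct.induction_on with
  | zero => simp
  | tmul p q => simp [leg13, leg23]
  | add x y hx hy => simp only [map_add, hx, hy]

lemma comm_leg23 {a b c : π} (y : H b ⊗[k] H c) :
    LinearMap.rTensor (H c) (TensorProduct.comm k (H a) (H b)).toLinearMap
      (leg23 k H a b c y) = leg13 k H b a c y := by
  induction y using TensorProduct.induction_on with
  | zero => simp
  | tmul p q => simp [leg13, leg23]
  | add x y hx hy => simp only [map_add, hx, hy]

lemma rTensor_map_alg {a b c d : π} (f : H a →ₐ[k] H b) :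
    LinearMap.rTensor (H d) (TensorProduct.map f.toLinearMap (LinearMap.id : H c →ₗ[k] H c))
      = (Algebra.TensorProduct.map (Algebra.TensorProduct.map f (AlgHom.id k (H c)))
          (AlgHom.id k (H d))).toLinearMap := by
  ext p q r
  simp

lemma rTensor_map_mul {a b c d : π} (f : H a →ₐ[k] H b)
    (x y : (H a ⊗[k] H c) ⊗[k] H d) :
    LinearMap.rTensor (H d) (TensorProduct.map f.toLinearMap (LinearMap.id : H c →ₗ[k] H c))
      (x * y)
    = LinearMap.rTensor (H d) (TensorProduct.map f.toLinearMap LinearMap.id) x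
      * LinearMap.rTensor (H d) (TensorProduct.map f.toLinearMap LinearMap.id) y := by
  rw [rTensor_map_alg]
  exact map_mul (Algebra.TensorProduct.map
    (Algebra.TensorProduct.map f (AlgHom.id k (H c))) (AlgHom.id k (H d))) x y

lemma rTensor_comm_alg {a b c : π} :
    LinearMap.rTensor (H c) (TensorProduct.comm k (H a) (H b)).toLinearMap
      = (Algebra.TensorProduct.map (Algebra.TensorProduct.comm k (H a) (H b)).toAlgHom
          (AlgHom.id k (H c))).toLinearMap := by
  ext p q r
  simp

lemma rTensor_comm_mul {a b c : π} (x y : (H a ⊗[k] H b) ⊗[k] H c) :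
    LinearMap.rTensor (H c) (TensorProduct.comm k (H a) (H b)).toLinearMap (x * y)
    = LinearMap.rTensor (H c) (TensorProduct.comm k (H a) (H b)).toLinearMap x
      * LinearMap.rTensor (H c) (TensorProduct.comm k (H a) (H b)).toLinearMap y := by
  rw [rTensor_comm_alg]
  exact map_mul (Algebra.TensorProduct.map
    (Algebra.TensorProduct.comm k (H a) (H b)).toAlgHom (AlgHom.id k (H c))) x y

end Helpers

set_option maxHeartbeats 2000000 in
/-- The `R`-matrix of a quasitriangular Hopf `π`-coalgebra satisfies the `π`-colored Yang-Baxter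
equation in `H α ⊗ H β ⊗ H γ`. -/
theorem colored_yang_baxter (k : Type) [Field k] (π : Type) [Group π] (H : π → Type)
    [∀ α, Ring (H α)] [∀ α, Algebra k (H α)] (Hc : HopfGrpCoalg k π H)
    (cr : Crossing k π H Hc) (Q : QTHopfGrpCoalg k π H Hc cr) (α β γ : π) :
    leg23 k H α β γ (Q.R β γ) * leg13 k H α β γ (Q.R α γ) * leg12 k H α β γ (Q.R α β)
      = leg12 k H α β γ (Q.R α β)
        * leg13 k H α β γ
            (LinearMap.lTensor (H α)
              ((castL k H (show β⁻¹ * (β * γ * β⁻¹) * β⁻¹⁻¹ = γ by group)) ∘ₗ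
                (cr.cross β⁻¹ (β * γ * β⁻¹)).toLinearMap)
              (Q.R α (β * γ * β⁻¹)))
        * leg23 k H α β γ (Q.R β γ) := by
  have c1 : α⁻¹ * (α * β * α⁻¹) * α⁻¹⁻¹ = β := by group
  have c2 : α * β = α * β * α⁻¹ * α := by group
  have c3 : α⁻¹ * (α * γ * α⁻¹) * α⁻¹⁻¹ = γ := by group
  set ψL : H (α * β * α⁻¹) →ₗ[k] H β :=
    (castL k H c1) ∘ₗ (cr.cross α⁻¹ (α * β * α⁻¹)).toLinearMap with hψL
  set G : H (α * β) →ₗ[k] H α ⊗[k] H β :=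
    (TensorProduct.comm k (H β) (H α)).toLinearMap
      ∘ₗ (TensorProduct.map ψL LinearMap.id
      ∘ₗ ((Hc.comul (α * β * α⁻¹) α).toLinearMap
      ∘ₗ castL k H c2)) with hG
  have stepB : ∀ t : H (α * β) ⊗[k] H γ,
      leg12 k H α β γ (Q.R α β) * LinearMap.rTensor (H γ) (Hc.comul α β).toLinearMap t
        = LinearMap.rTensor (H γ) G t * leg12 k H α β γ (Q.R α β) := by
    intro t
    induction t using TensorProduct.induction_on with
    | zero => simp
    | tmul a b =>
        have h1 := Q.qt1 α β a
        simp only [leg12, LinearMap.flip_apply, TensorProduct.mk_apply,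
          LinearMap.rTensor_tmul, AlgHom.toLinearMap_apply, hG, hψL, LinearMap.comp_apply,
          LinearEquiv.coe_coe]
        rw [Algebra.TensorProduct.tmul_mul_tmul, Algebra.TensorProduct.tmul_mul_tmul,
          one_mul, mul_one, h1]
    | add x y hx hy => simp only [map_add, mul_add, add_mul, hx, hy]
  have inner : LinearMap.rTensor (H γ) ψL
      (LinearMap.lTensor (H (α * β * α⁻¹))
        ((castL k H c3) ∘ₗ (cr.cross α⁻¹ (α * γ * α⁻¹)).toLinearMap)
        (Q.R (α * β * α⁻¹) (α * γ * α⁻¹))) = Q.R β γ := by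
    rw [← LinearMap.comp_apply, LinearMap.rTensor_comp_lTensor, hψL,
      TensorProduct.map_comp, LinearMap.comp_apply,
      Q.qt4 (α * β * α⁻¹) α⁻¹ (α * γ * α⁻¹), map_castL_R]
  have hψA : ψL = ((castA k H c1).comp (cr.cross α⁻¹ (α * β * α⁻¹))).toLinearMap := by
    rw [AlgHom.comp_toLinearMap, castA_toLinearMap, hψL]
  have stepC : LinearMap.rTensor (H γ) G (Q.R (α * β) γ)
      = leg23 k H α β γ (Q.R β γ) * leg13 k H α β γ (Q.R α γ) := by
    rw [hG, LinearMap.rTensor_comp, LinearMap.rTensor_comp, LinearMap.rTensor_comp]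
    simp only [LinearMap.comp_apply]
    rw [rTensor_castL_R k H Q c2 γ, Q.qt3 (α * β * α⁻¹) α γ, hψA, rTensor_map_mul,
      map_leg13, map_leg23, ← hψA, inner, rTensor_comm_mul, comm_leg13, comm_leg23]
  calc
    leg23 k H α β γ (Q.R β γ) * leg13 k H α β γ (Q.R α γ) * leg12 k H α β γ (Q.R α β)
        = LinearMap.rTensor (H γ) G (Q.R (α * β) γ) * leg12 k H α β γ (Q.R α β) := by
          rw [stepC]
    _ = leg12 k H α β γ (Q.R α β)
          * LinearMap.rTensor (H γ) (Hc.comul α β).toLinearMap (Q.R (α * β) γ) :=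
        (stepB _).symm
    _ = _ := by rw [Q.qt3 α β γ, ← mul_assoc]
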